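/- Let M be a right A-module with a hom-connection ∇ (not necessarily flat) with respect to the universal differential calculus, and define a·m := m a + ∇(φ_{m,a}). Then this operation is unital and commutes with the right action: 1·m = m and (a·m) b = a·(m b) for all a, b ∈ A and m ∈ M. (Flatness is not needed; it is only required for associativity of the induced left action.) -/

import Mathlib

open TensorProduct MulOpposite

variable (K A M : Type*) [Field K] [Ring A] [Algebra K A]
  [AddCommGroup M] [Module K M] [Module Aᵐᵒᵖ M] [IsScalarTower K Aᵐᵒᵖ M]

/-- The space `Ω¹A = ker(μ : A ⊗ A → A)` of universal one-forms. -/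
noncomputable def Omega1 : Submodule K (A ⊗[K] A) := LinearMap.ker (LinearMap.mul' K A)

lemma mul'_lTensor_mulRight (b : A) (x : A ⊗[K] A) :
    LinearMap.mul' K A (LinearMap.lTensor A (LinearMap.mulRight K b) x)
      = LinearMap.mul' K A x * b := by
  induction x using TensorProduct.induction_on with
  | zero => simp
  | tmul x y => simp [mul_assoc]
  | add u v hu hv => simp [hu, hv, add_mul]

lemma mul'_rTensor_mulLeft (a : A) (x : A ⊗[K] A) :
    LinearMap.mul' K A (LinearMap.rTensor A (LinearMap.mulLeft K a) x)
      = a * LinearMap.mul' K A x := by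
  induction x using TensorProduct.induction_on with
  | zero => simp
  | tmul x y => simp [mul_assoc]
  | add u v hu hv => simp [hu, hv, mul_add]

/-- Right `A`-action on `Ω¹A`: multiplication of the second tensor factor. -/
noncomputable def omegaR (b : A) : Omega1 K A →ₗ[K] Omega1 K A :=
  (LinearMap.lTensor A (LinearMap.mulRight K b)).restrict (fun x hx => by
    simp only [Omega1, LinearMap.mem_ker] at hx ⊢
    rw [mul'_lTensor_mulRight, hx, zero_mul])

/-- Left `A`-action on `Ω¹A`: multiplication of the first tensor factor. -/
noncomputable def omegaL (a : A) : Omega1 K A →ₗ[K] Omega1 K A :=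
  (LinearMap.rTensor A (LinearMap.mulLeft K a)).restrict (fun x hx => by
    simp only [Omega1, LinearMap.mem_ker] at hx ⊢
    rw [mul'_rTensor_mulLeft, hx, mul_zero])

/-- The space `Hom_A(Ω¹A, M)` of right `A`-linear maps `Ω¹A → M`. -/
noncomputable def rHom : Submodule K (↥(Omega1 K A) →ₗ[K] M) where
  carrier := {f | ∀ (b : A) (ω : Omega1 K A), f (omegaR K A b ω) = op b • f ω}
  add_mem' := by intro f g hf hg b ω; simp [hf b ω, hg b ω, smul_add]
  zero_mem' := by intro b ω; simp
  smul_mem' := by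
    intro c f hf b ω
    simp only [LinearMap.smul_apply, hf b ω]
    rw [smul_comm]

/-- The universal differential `d a = 1 ⊗ a − a ⊗ 1 ∈ Ω¹A`. -/
noncomputable def dEl (a : A) : Omega1 K A :=
  ⟨(1 : A) ⊗ₜ[K] a - a ⊗ₜ[K] (1 : A), by
    simp [Omega1, LinearMap.mem_ker]⟩

lemma omegaL_omegaR_comm (a b : A) (ω : Omega1 K A) :
    omegaL K A a (omegaR K A b ω) = omegaR K A b (omegaL K A a ω) := by
  apply Subtype.ext
  show (LinearMap.rTensor A (LinearMap.mulLeft K a))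
      ((LinearMap.lTensor A (LinearMap.mulRight K b)) ω.1)
    = (LinearMap.lTensor A (LinearMap.mulRight K b))
      ((LinearMap.rTensor A (LinearMap.mulLeft K a)) ω.1)
  rw [← LinearMap.comp_apply, ← LinearMap.comp_apply, LinearMap.rTensor_comp_lTensor,
    LinearMap.lTensor_comp_rTensor]

/-- The right `A`-action on `Hom_A(Ω¹A, M)`: `(f·a)(ω) := f(a·ω)`. -/
noncomputable def fDot (f : rHom K A M) (a : A) : rHom K A M :=
  ⟨(f : ↥(Omega1 K A) →ₗ[K] M).comp (omegaL K A a), by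
    intro b ω
    simp only [LinearMap.comp_apply, omegaL_omegaR_comm]
    exact f.2 b (omegaL K A a ω)⟩

/-- `D : Hom_A(Ω¹A, M) → M` is a hom-connection with respect to the universal
differential calculus: `D(f·a) = D(f) a + f(da)`. -/
def IsHomConnection (D : ↥(rHom K A M) →ₗ[K] M) : Prop :=
  ∀ (f : rHom K A M) (a : A),
    D (fDot K A M f a) = op a • D f + (f : ↥(Omega1 K A) →ₗ[K] M) (dEl K A a)

/-- The map `A ⊗ A → M`, `x ⊗ y ↦ m x a y`. -/
noncomputable def phiHat (m : M) (a : A) : A ⊗[K] A →ₗ[K] M :=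
  TensorProduct.lift (LinearMap.mk₂ K (fun x y => op (x * a * y) • m)
    (fun x₁ x₂ y => by simp only [add_mul, op_add, add_smul])
    (fun k x y => by
      simp only [smul_mul_assoc, op_smul, smul_assoc])
    (fun x y₁ y₂ => by simp only [mul_add, op_add, add_smul])
    (fun k x y => by
      simp only [mul_smul_comm, op_smul, smul_assoc]))

lemma phiHat_lTensor_mulRight (m : M) (a b : A) (x : A ⊗[K] A) :
    phiHat K A M m a (LinearMap.lTensor A (LinearMap.mulRight K b) x)
      = op b • phiHat K A M m a x := by
  induction x using TensorProduct.induction_on with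
  | zero => simp
  | tmul x y =>
      simp only [LinearMap.lTensor_tmul, LinearMap.mulRight_apply, phiHat,
        TensorProduct.lift.tmul, LinearMap.mk₂_apply]
      simp only [smul_smul, ← op_mul, mul_assoc]
  | add u v hu hv => simp [hu, hv, smul_add]

/-- The element `φ_{m,a} ∈ Hom_A(Ω¹A, M)`, `Σ aᵢ ⊗ bᵢ ↦ Σ m aᵢ a bᵢ`. -/
noncomputable def phi (m : M) (a : A) : rHom K A M :=
  ⟨(phiHat K A M m a).comp (Omega1 K A).subtype, by
    intro b ω
    show phiHat K A M m a ((omegaR K A b ω) : A ⊗[K] A) = op b • phiHat K A M m a ω.1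
    have : ((omegaR K A b ω) : A ⊗[K] A)
        = LinearMap.lTensor A (LinearMap.mulRight K b) ω.1 := rfl
    rw [this, phiHat_lTensor_mulRight]⟩

/-- The induced left operation of a hom-connection: `a·m := m a + D(φ_{m,a})`. -/
noncomputable def lact (D : ↥(rHom K A M) →ₗ[K] M) (a : A) (m : M) : M :=
  op a • m + D (phi K A M m a)

/-!
For `a = 1`, `φ_{m,1}` is `m` times the multiplication map, which vanishes on `Ω¹A`.
For the right action, `φ_{m b, a} = φ_{m,a}·b`, so the connection rule gives
`D(φ_{m b, a}) = D(φ_{m,a}) b + φ_{m,a}(db)`, and the correction `φ_{m,a}(db) = m a b − m b a`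
is exactly the difference between `(m a) b` and `(m b) a`.
-/

lemma phiHat_one (m : M) (x : A ⊗[K] A) :
    phiHat K A M m 1 x = op (LinearMap.mul' K A x) • m := by
  induction x using TensorProduct.induction_on with
  | zero => simp
  | tmul x y => simp [phiHat]
  | add u v hu hv => simp [hu, hv, add_smul]

lemma phi_one (m : M) : phi K A M m 1 = 0 := by
  refine Subtype.ext (LinearMap.ext fun ω => ?_)
  have hω : LinearMap.mul' K A ω.1 = 0 := LinearMap.mem_ker.mp ω.2
  show phiHat K A M m 1 ω.1 = 0
  rw [phiHat_one, hω, op_zero, zero_smul]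

lemma lact_one (D : ↥(rHom K A M) →ₗ[K] M) (m : M) : lact K A M D 1 m = m := by
  rw [lact, phi_one, map_zero, add_zero, op_one, one_smul]

lemma phiHat_rTensor_mulLeft (m : M) (a b : A) (x : A ⊗[K] A) :
    phiHat K A M m a (LinearMap.rTensor A (LinearMap.mulLeft K b) x)
      = phiHat K A M (op b • m) a x := by
  induction x using TensorProduct.induction_on with
  | zero => simp
  | tmul x y =>
      simp only [LinearMap.rTensor_tmul, LinearMap.mulLeft_apply, phiHat,
        TensorProduct.lift.tmul, LinearMap.mk₂_apply, smul_smul, ← op_mul, mul_assoc]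
  | add u v hu hv => simp [hu, hv]

lemma fDot_phi (m : M) (a b : A) :
    fDot K A M (phi K A M m a) b = phi K A M (op b • m) a :=
  Subtype.ext (LinearMap.ext fun ω => phiHat_rTensor_mulLeft K A M m a b ω.1)

lemma phi_dEl (m : M) (a b : A) :
    (phi K A M m a : ↥(Omega1 K A) →ₗ[K] M) (dEl K A b)
      = op (a * b) • m - op (b * a) • m := by
  show phiHat K A M m a ((1 : A) ⊗ₜ[K] b - b ⊗ₜ[K] (1 : A)) = _
  simp [phiHat]

lemma IsHomConnection.op_smul_lact {D : ↥(rHom K A M) →ₗ[K] M} (hD : IsHomConnection K A M D)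
    (a b : A) (m : M) : op b • lact K A M D a m = lact K A M D a (op b • m) := by
  have hφ : D (phi K A M (op b • m) a)
      = op b • D (phi K A M m a) + op (a * b) • m - op (b * a) • m := by
    rw [← fDot_phi, hD, phi_dEl, add_sub_assoc]
  rw [lact, lact, hφ, smul_add, smul_smul, smul_smul, ← op_mul, ← op_mul]
  abel

/-- For any (not necessarily flat) hom-connection `D` on a right
`A`-module `M` with respect to the universal differential calculus, the induced left
operation `a·m := m a + D(φ_{m,a})` is unital and commutes with the right action. -/
theorem homConnection_left_operation_unital_and_commutes (D : ↥(rHom K A M) →ₗ[K] M)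
    (hD : IsHomConnection K A M D) :
    (∀ m : M, lact K A M D 1 m = m) ∧
    (∀ (a b : A) (m : M), op b • lact K A M D a m = lact K A M D a (op b • m)) :=
  ⟨lact_one K A M D, hD.op_smul_lact⟩
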